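/- Fix a real number $q$ with $0 < q < 1$. For every integer $N$, the kernel of $T_N : V_N \to V_{N-2}$ and the cokernel $V_{N-2}/\mathrm{Im}\, T_N$ are both finite-dimensional over $\mathbb{C}$, and $\dim_{\mathbb{C}} \mathrm{Ker}\, T_N - \dim_{\mathbb{C}} (V_{N-2}/\mathrm{Im}\, T_N) = 1 - N$. -/

import Mathlib

/-- The `q`-integer `[n] = (qⁿ - q⁻ⁿ)/(q - q⁻¹)`. -/
noncomputable def qint (q : ℝ) (n : ℤ) : ℝ :=
  (q ^ n - q ^ (-n)) / (q - q⁻¹)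

/-- The index set `S_N = {(a,b) : a ≥ |N|, a ≡ N (mod 2), |b| ≤ a, b ≡ a (mod 2)}`. -/
def SN (N : ℤ) : Set (ℤ × ℤ) :=
  {p | |N| ≤ p.1 ∧ p.1 % 2 = N % 2 ∧ |p.2| ≤ p.1 ∧ p.2 % 2 = p.1 % 2}

/-- `V_N`: the `ℂ`-vector space of finitely supported functions on `S_N`, with standard
basis `(e_{a,b})`. -/
abbrev VN (N : ℤ) : Type :=
  SN N →₀ ℂ

/-- The coefficient `√([ (a-N)/2 + 1 ] [ (a+N)/2 ])` of the Dolbeault operator. -/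
noncomputable def coeffT (q : ℝ) (N : ℤ) (p : ℤ × ℤ) : ℝ :=
  Real.sqrt (qint q ((p.1 - N) / 2 + 1) * qint q ((p.1 + N) / 2))

/-- The anti-holomorphic Dolbeault operator `T_N : V_N → V_{N-2}`,
`T_N e_{a,b} = √([ (a-N)/2 + 1 ] [ (a+N)/2 ]) e_{a,b}` if `(a,b) ∈ S_{N-2}`, and `0`
otherwise. -/
noncomputable def TN (q : ℝ) (N : ℤ) : VN N →ₗ[ℂ] VN (N - 2) :=
  Finsupp.lsum ℂ fun p : SN N =>
    letI := Classical.dec ((p : ℤ × ℤ) ∈ SN (N - 2))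
    if h : (p : ℤ × ℤ) ∈ SN (N - 2) then
      ((coeffT q N p : ℝ) : ℂ) • Finsupp.lsingle (⟨(p : ℤ × ℤ), h⟩ : SN (N - 2))
    else 0

/-!
In the standard bases `T_N` is diagonal: it sends `e_{a,b}` to a multiple of `e_{a,b}`, with a
coefficient that is a square root of a product of two `q`-integers `[n]`, `n > 0`, hence nonzero,
whenever `(a,b) ∈ S_N ∩ S_{N-2}`, and it kills `e_{a,b}` otherwise. So the kernel is spanned by
the `e_{a,b}` with `(a,b) ∈ S_N \ S_{N-2}`, i.e. `a = -N`, which gives `1 - N` vectors when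
`N ≤ 0`; the cokernel by those with `(a,b) ∈ S_{N-2} \ S_N`, i.e. `a = N - 2`, which gives
`N - 1` vectors when `N ≥ 1`. In both cases the difference is `1 - N`.
-/

section Diagonal

open Module Finsupp

variable {X K : Type*} [Field K]

lemma finrank_supported (u : Set X) : finrank K (supported K K u) = u.ncard :=
  finrank_eq_nat_card_basis ((Finsupp.basisSingleOne).map (supportedEquivFinsupp u).symm)

lemma finite_supported {u : Set X} (hu : u.Finite) : Module.Finite K (supported K K u) :=
  have := hu.to_subtype
  Module.Finite.equiv (supportedEquivFinsupp u).symm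

lemma isCompl_supported_compl (u : Set X) : IsCompl (supported K K u) (supported K K uᶜ) :=
  ⟨disjoint_supported_supported isCompl_compl.disjoint,
    codisjoint_supported_supported isCompl_compl.codisjoint⟩

lemma finrank_quotient_supported (u : Set X) :
    finrank K ((X →₀ K) ⧸ supported K K u) = uᶜ.ncard :=
  ((Submodule.quotientEquivOfIsCompl _ _ (isCompl_supported_compl u)).finrank_eq).trans
    (finrank_supported _)

lemma finite_quotient_supported {u : Set X} (hu : uᶜ.Finite) :
    Module.Finite K ((X →₀ K) ⧸ supported K K u) :=
  have := finite_supported (K := K) hu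
  Module.Finite.equiv (Submodule.quotientEquivOfIsCompl _ _ (isCompl_supported_compl u)).symm

lemma ncard_preimage_val (s t : Set X) : ((↑) ⁻¹' t : Set s).ncard = (s ∩ t).ncard := by
  rw [← Subtype.image_preimage_coe, Set.ncard_image_of_injective _ Subtype.val_injective]

lemma finite_preimage_val {s t : Set X} (h : (s ∩ t).Finite) : ((↑) ⁻¹' t : Set s).Finite :=
  Set.Finite.of_finite_image (by rwa [Subtype.image_preimage_coe]) Subtype.val_injective.injOn

variable (c : X → K) (s t : Set X)

noncomputable def diagonalMap : (s →₀ K) →ₗ[K] (t →₀ K) :=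
  Finsupp.lsum K fun p : s =>
    letI := Classical.dec ((p : X) ∈ t)
    if h : (p : X) ∈ t then c p • Finsupp.lsingle (⟨p, h⟩ : t) else 0

variable {c s t}

open Classical in
lemma diagonalMap_apply (f : s →₀ K) (r : t) :
    diagonalMap c s t f r = if h : (r : X) ∈ s then c r * f ⟨r, h⟩ else 0 := by
  induction f using Finsupp.induction_linear with
  | zero => simp
  | add f g hf hg => simp only [map_add, Finsupp.add_apply, hf, hg]; split_ifs <;> ring
  | single p a =>
    obtain ⟨p, hps⟩ := p
    obtain ⟨r, hrt⟩ := r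
    by_cases hpr : p = r
    · subst hpr
      simp [diagonalMap, hps, hrt]
    · simp only [diagonalMap, Finsupp.lsum_single]
      split_ifs <;> simp [hpr]

lemma ker_diagonalMap (hc : ∀ x ∈ s, x ∈ t → c x ≠ 0) :
    LinearMap.ker (diagonalMap c s t) = supported K K ((↑) ⁻¹' tᶜ) := by
  ext f
  simp only [LinearMap.mem_ker, mem_supported', Set.mem_preimage, Set.mem_compl_iff, not_not,
    Finsupp.ext_iff, Finsupp.coe_zero, Pi.zero_apply, diagonalMap_apply]
  constructor
  · intro hf p hpt
    simpa [p.2, hc _ p.2 hpt] using hf ⟨p, hpt⟩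
  · intro hf r
    split_ifs with hrs
    · simp [hf ⟨r, hrs⟩ r.2]
    · rfl

lemma range_diagonalMap (hc : ∀ x ∈ s, x ∈ t → c x ≠ 0) :
    LinearMap.range (diagonalMap c s t) = supported K K ((↑) ⁻¹' s) := by
  refine le_antisymm ?_ ?_
  · rintro _ ⟨f, rfl⟩
    rw [mem_supported']
    intro r (hrs : (r : X) ∉ s)
    simp [diagonalMap_apply, hrs]
  · rw [supported_eq_span_single, Submodule.span_le]
    rintro _ ⟨r, hrs : (r : X) ∈ s, rfl⟩
    refine ⟨Finsupp.single ⟨r, hrs⟩ (c r)⁻¹, Finsupp.ext fun r' => ?_⟩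
    by_cases hr' : r' = r
    · subst hr'
      simp [diagonalMap_apply, hrs, hc _ hrs r'.2]
    · have hrr' : (r : X) ≠ r' := fun h => hr' (Subtype.ext h.symm)
      simp [diagonalMap_apply, hrr', Ne.symm hr']

lemma finrank_ker_diagonalMap (hc : ∀ x ∈ s, x ∈ t → c x ≠ 0) :
    finrank K (LinearMap.ker (diagonalMap c s t)) = (s \ t).ncard := by
  rw [ker_diagonalMap hc, finrank_supported, ncard_preimage_val, Set.sdiff_eq]

lemma finite_ker_diagonalMap (hc : ∀ x ∈ s, x ∈ t → c x ≠ 0) (hst : (s \ t).Finite) :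
    Module.Finite K (LinearMap.ker (diagonalMap c s t)) := by
  rw [ker_diagonalMap hc]
  exact finite_supported (finite_preimage_val hst)

lemma finrank_coker_diagonalMap (hc : ∀ x ∈ s, x ∈ t → c x ≠ 0) :
    finrank K ((t →₀ K) ⧸ LinearMap.range (diagonalMap c s t)) = (t \ s).ncard := by
  rw [range_diagonalMap hc, finrank_quotient_supported, ← Set.preimage_compl, ncard_preimage_val,
    Set.sdiff_eq]

lemma finite_coker_diagonalMap (hc : ∀ x ∈ s, x ∈ t → c x ≠ 0) (hts : (t \ s).Finite) :
    Module.Finite K ((t →₀ K) ⧸ LinearMap.range (diagonalMap c s t)) := by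
  rw [range_diagonalMap hc]
  exact finite_quotient_supported (finite_preimage_val hts)

end Diagonal

lemma qint_pos {q : ℝ} (hq : 0 < q) (hq1 : q ≠ 1) {n : ℤ} (hn : 0 < n) : 0 < qint q n := by
  rcases hq1.lt_or_gt with hlt | hgt
  · have hpow : q ^ n < q ^ (-n) := zpow_lt_zpow_right_of_lt_one₀ hq hlt (by omega)
    have hinv : 1 < q⁻¹ := (one_lt_inv₀ hq).mpr hlt
    exact div_pos_of_neg_of_neg (by linarith) (by linarith)
  · have hpow : q ^ (-n) < q ^ n := zpow_lt_zpow_right₀ hgt (by omega)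
    have hinv : q⁻¹ < 1 := inv_lt_one_of_one_lt₀ hgt
    exact div_pos (by linarith) (by linarith)

lemma mem_SN_iff {N : ℤ} {p : ℤ × ℤ} :
    p ∈ SN N ↔ (-p.1 ≤ N ∧ N ≤ p.1) ∧ p.1 % 2 = N % 2 ∧ (-p.1 ≤ p.2 ∧ p.2 ≤ p.1) ∧
      p.2 % 2 = p.1 % 2 := by
  simp only [SN, Set.mem_ofPred_eq, abs_le]

lemma coeffT_pos {q : ℝ} (hq : 0 < q) (hq1 : q ≠ 1) {N : ℤ} {p : ℤ × ℤ}
    (hp : p ∈ SN N) (hp' : p ∈ SN (N - 2)) : 0 < coeffT q N p := by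
  rw [mem_SN_iff] at hp hp'
  exact Real.sqrt_pos.mpr
    (mul_pos (qint_pos hq hq1 (by omega)) (qint_pos hq hq1 (by omega)))

lemma ncard_image_Iio {α : Type*} {f : ℕ → α} (hf : f.Injective) (n : ℕ) :
    (f '' Set.Iio n).ncard = n := by
  rw [Set.ncard_image_of_injective _ hf, Set.ncard_Iio_nat]

lemma SN_diff_SN_sub_two (N : ℤ) :
    SN N \ SN (N - 2) = (fun k : ℕ => (-N, N + 2 * k)) '' Set.Iio (1 - N).toNat := by
  ext ⟨a, b⟩
  simp only [Set.mem_sdiff, mem_SN_iff, Set.mem_image, Set.mem_Iio, Prod.mk.injEq]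
  constructor
  · intro h
    exact ⟨((b - N) / 2).toNat, by omega, by omega, by omega⟩
  · rintro ⟨k, hk, rfl, rfl⟩
    omega

lemma SN_sub_two_diff_SN (N : ℤ) :
    SN (N - 2) \ SN N = (fun k : ℕ => (N - 2, 2 - N + 2 * k)) '' Set.Iio (N - 1).toNat := by
  ext ⟨a, b⟩
  simp only [Set.mem_sdiff, mem_SN_iff, Set.mem_image, Set.mem_Iio, Prod.mk.injEq]
  constructor
  · intro h
    exact ⟨((b + N - 2) / 2).toNat, by omega, by omega, by omega⟩
  · rintro ⟨k, hk, rfl, rfl⟩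
    omega

lemma ncard_SN_diff_SN_sub_two (N : ℤ) : (SN N \ SN (N - 2)).ncard = (1 - N).toNat := by
  rw [SN_diff_SN_sub_two, ncard_image_Iio]
  intro k l h
  simp only [Prod.mk.injEq] at h
  omega

lemma ncard_SN_sub_two_diff_SN (N : ℤ) : (SN (N - 2) \ SN N).ncard = (N - 1).toNat := by
  rw [SN_sub_two_diff_SN, ncard_image_Iio]
  intro k l h
  simp only [Prod.mk.injEq] at h
  omega

lemma TN_eq_diagonalMap (q : ℝ) (N : ℤ) :
    TN q N = diagonalMap (fun p => ((coeffT q N p : ℝ) : ℂ)) (SN N) (SN (N - 2)) :=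
  rfl

/-- for `0 < q < 1` and every integer `N`, the kernel and cokernel of
`T_N : V_N → V_{N-2}` are finite-dimensional over `ℂ` and
`dim Ker T_N - dim (V_{N-2}/Im T_N) = 1 - N` (the holomorphic Euler characteristic
`χ(ℂP¹_q, L_N) = -N + 1`). -/
theorem stmt10 (q : ℝ) (hq0 : 0 < q) (hq1 : q < 1) (N : ℤ) :
    FiniteDimensional ℂ (LinearMap.ker (TN q N)) ∧
    FiniteDimensional ℂ (VN (N - 2) ⧸ LinearMap.range (TN q N)) ∧
    (Module.finrank ℂ (LinearMap.ker (TN q N)) : ℤ) -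
      (Module.finrank ℂ (VN (N - 2) ⧸ LinearMap.range (TN q N)) : ℤ) = 1 - N := by
  have hc : ∀ p ∈ SN N, p ∈ SN (N - 2) → ((coeffT q N p : ℝ) : ℂ) ≠ 0 := fun p hp hp' =>
    Complex.ofReal_ne_zero.mpr (coeffT_pos hq0 hq1.ne hp hp').ne'
  rw [TN_eq_diagonalMap]
  refine ⟨finite_ker_diagonalMap hc ?_, finite_coker_diagonalMap hc ?_, ?_⟩
  · rw [SN_diff_SN_sub_two]; exact (Set.finite_Iio _).image _
  · rw [SN_sub_two_diff_SN]; exact (Set.finite_Iio _).image _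
  · rw [finrank_ker_diagonalMap hc, finrank_coker_diagonalMap hc, ncard_SN_diff_SN_sub_two,
      ncard_SN_sub_two_diff_SN]
    omega
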